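/- arXiv:2203.16816 — 4 statements merged into one kernel-verified Lean document; each statement's English description precedes it below -/
import Mathlib

section
/- If g: [0,1] → [0,1] is increasing, then the increasing rearrangement of g equals g almost everywhere; in particular ∫₀¹ f(x)·g(x) dx ≤ ∫₀¹ f^+(x)·g(x) dx for any non-negative measurable f on [0,1]. -/
open MeasureTheory Set Filter

/-- Increasing rearrangement on `[0,1]`:
`f^+(t) = inf {s : μ{x ∈ [0,1] : f x ≥ s} ≤ 1 - t}`. -/
noncomputable def incRearrange (f : ℝ → ℝ) (t : ℝ) : ℝ :=
  sInf {s : ℝ | volume {x ∈ Icc (0:ℝ) 1 | s ≤ f x} ≤ ENNReal.ofReal (1 - t)}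

lemma part1 (g : ℝ → ℝ)
    (hg : MonotoneOn g (Icc (0:ℝ) 1))
    (hgr : ∀ x ∈ Icc (0:ℝ) 1, g x ∈ Icc (0:ℝ) 1) :
    (∀ᵐ x ∂(volume.restrict (Icc (0:ℝ) 1)), incRearrange g x = g x) := by
  set c : ℝ → ℝ := fun x => g (max 0 (min 1 x)) with hc
  have hproj : ∀ x : ℝ, max 0 (min 1 x) ∈ Icc (0:ℝ) 1 := by
    intro x
    constructor
    · exact le_max_left _ _
    · exact max_le (by norm_num) (min_le_left _ _)
  have hc_mono : Monotone c := by
    intro a b hab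
    exact hg (hproj a) (hproj b) (max_le_max le_rfl (min_le_min le_rfl hab))
  have hc_eq : ∀ x ∈ Icc (0:ℝ) 1, c x = g x := by
    intro x hx
    simp only [hc]
    rw [min_eq_right hx.2, max_eq_right hx.1]
  have h_count : {x | ¬ContinuousAt c x}.Countable := hc_mono.countable_not_continuousAt
  have h_ne : ∀ᵐ x ∂(volume : Measure ℝ), ¬ x ∈ ({0, 1} : Set ℝ) := by
    refine ae_iff.2 ?_
    simp only [not_not]
    exact (Set.toFinite ({0,1} : Set ℝ)).countable.measure_zero volume
  have h_cont : ∀ᵐ x ∂(volume : Measure ℝ), ContinuousAt c x :=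
    ae_iff.2 (h_count.measure_zero volume)
  have h_ae : ∀ᵐ x ∂(volume.restrict (Icc (0:ℝ) 1)),
      x ∈ Ioo (0:ℝ) 1 ∧ ContinuousAt c x := by
    filter_upwards [ae_restrict_mem (measurableSet_Icc : MeasurableSet (Icc (0:ℝ) 1)),
      ae_restrict_of_ae h_ne, ae_restrict_of_ae h_cont] with x hxI hne hcont
    simp only [mem_insert_iff, mem_singleton_iff, not_or] at hne
    exact ⟨⟨lt_of_le_of_ne hxI.1 (Ne.symm hne.1), lt_of_le_of_ne hxI.2 hne.2⟩, hcont⟩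
  filter_upwards [h_ae] with x hx
  obtain ⟨hx01, hcont⟩ := hx
  have hxI : x ∈ Icc (0:ℝ) 1 := ⟨hx01.1.le, hx01.2.le⟩
  -- lower bound
  have hlow : ∀ y ∈ Ico (0:ℝ) x, g y ≤ incRearrange g x := by
    intro y hy
    have hyI : y ∈ Icc (0:ℝ) 1 := ⟨hy.1, hy.2.le.trans hx01.2.le⟩
    apply le_csInf
    · refine ⟨2, ?_⟩
      have : {z ∈ Icc (0:ℝ) 1 | (2:ℝ) ≤ g z} = ∅ := by
        ext z
        simp only [mem_setOf_eq, mem_empty_iff_false, iff_false, not_and, sep_setOf]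
        intro hz h2
        have := (hgr z hz).2
        linarith
      simp only [mem_setOf_eq]
      rw [this]
      simp
    · intro b hb
      by_contra hgy
      push_neg at hgy
      have hsub : Icc y 1 ⊆ {z ∈ Icc (0:ℝ) 1 | b ≤ g z} := by
        intro z hz
        have hzI : z ∈ Icc (0:ℝ) 1 := ⟨hy.1.trans hz.1, hz.2⟩
        exact ⟨hzI, le_of_lt (lt_of_lt_of_le hgy (hg hyI hzI hz.1))⟩
      have h1 : ENNReal.ofReal (1 - y) ≤ ENNReal.ofReal (1 - x) := by
        calc ENNReal.ofReal (1 - y) = volume (Icc y 1) := (Real.volume_Icc).symm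
        _ ≤ volume {z ∈ Icc (0:ℝ) 1 | b ≤ g z} := measure_mono hsub
        _ ≤ ENNReal.ofReal (1 - x) := hb
      have h2 : ENNReal.ofReal (1 - x) < ENNReal.ofReal (1 - y) := by
        have hy2 : y < x := hy.2
        have hx2 : x < 1 := hx01.2
        exact (ENNReal.ofReal_lt_ofReal_iff (by linarith)).2 (by linarith)
      exact absurd h1 (not_le.2 h2)
  have hup : ∀ y ∈ Ioc x 1, incRearrange g x ≤ g y := by
    intro y hy
    have hyI : y ∈ Icc (0:ℝ) 1 := ⟨hx01.1.le.trans hy.1.le, hy.2⟩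
    have hbdd : BddBelow {s : ℝ | volume {z ∈ Icc (0:ℝ) 1 | s ≤ g z} ≤ ENNReal.ofReal (1 - x)} := by
      refine ⟨0, fun s hs => ?_⟩
      by_contra hs0
      push_neg at hs0
      have : Icc (0:ℝ) 1 ⊆ {z ∈ Icc (0:ℝ) 1 | s ≤ g z} := by
        intro z hz
        exact ⟨hz, le_of_lt (lt_of_lt_of_le hs0 (hgr z hz).1)⟩
      have h1 : (1:ENNReal) ≤ ENNReal.ofReal (1 - x) := by
        calc (1:ENNReal) = volume (Icc (0:ℝ) 1) := by simp [Real.volume_Icc]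
        _ ≤ _ := measure_mono this
        _ ≤ _ := hs
      have h2 : ENNReal.ofReal (1 - x) < 1 := by
        rw [show (1:ENNReal) = ENNReal.ofReal 1 by simp]
        have hx1 : 0 < x := hx01.1
        exact (ENNReal.ofReal_lt_ofReal_iff (by norm_num)).2 (by linarith)
      exact absurd h1 (not_le.2 h2)
    refine le_of_forall_gt_imp_ge_of_dense fun b hb => csInf_le hbdd ?_
    have hsub : {z ∈ Icc (0:ℝ) 1 | b ≤ g z} ⊆ Ioc y 1 := by
      intro z hz
      obtain ⟨hzI, hbz⟩ := hz
      constructor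
      · by_contra hzy
        push_neg at hzy
        have := hg hzI hyI hzy
        linarith
      · exact hzI.2
    calc volume {z ∈ Icc (0:ℝ) 1 | b ≤ g z} ≤ volume (Ioc y 1) := measure_mono hsub
    _ = ENNReal.ofReal (1 - y) := Real.volume_Ioc
    _ ≤ ENNReal.ofReal (1 - x) := ENNReal.ofReal_le_ofReal (by linarith [hy.1])
  -- combine via continuity
  have h1 : c x ≤ incRearrange g x := by
    apply le_of_tendsto (hcont.continuousWithinAt.tendsto :
      Tendsto c (nhdsWithin x (Iio x)) (nhds (c x)))
    filter_upwards [Ioo_mem_nhdsLT_of_mem (⟨hx01.1, le_refl x⟩ : x ∈ Ioc 0 x)] with y hy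
    rw [hc_eq y ⟨hy.1.le, hy.2.le.trans hx01.2.le⟩]
    exact hlow y ⟨hy.1.le, hy.2⟩
  have h2 : incRearrange g x ≤ c x := by
    apply ge_of_tendsto (hcont.continuousWithinAt.tendsto :
      Tendsto c (nhdsWithin x (Ioi x)) (nhds (c x)))
    filter_upwards [Ioo_mem_nhdsGT_of_mem (⟨le_refl x, hx01.2⟩ : x ∈ Ico x 1)] with y hy
    rw [hc_eq y ⟨hx01.1.le.trans hy.1.le, hy.2.le⟩]
    exact hup y ⟨hy.1, hy.2.le⟩
  rw [← hc_eq x hxI]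
  exact le_antisymm h2 h1

lemma mem_S_nonneg (f : ℝ → ℝ) (hf0 : ∀ x ∈ Icc (0:ℝ) 1, 0 ≤ f x) {x : ℝ} (hx : 0 < x)
    {s : ℝ} (hs : volume {y ∈ Icc (0:ℝ) 1 | s ≤ f y} ≤ ENNReal.ofReal (1 - x)) : 0 ≤ s := by
  by_contra hs0
  push_neg at hs0
  have hsub : Icc (0:ℝ) 1 ⊆ {y ∈ Icc (0:ℝ) 1 | s ≤ f y} :=
    fun y hy => ⟨hy, le_of_lt (lt_of_lt_of_le hs0 (hf0 y hy))⟩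
  have h1 : (1:ENNReal) ≤ ENNReal.ofReal (1 - x) := by
    calc (1:ENNReal) = volume (Icc (0:ℝ) 1) := by simp [Real.volume_Icc]
    _ ≤ _ := measure_mono hsub
    _ ≤ _ := hs
  have h2 : ENNReal.ofReal (1 - x) < 1 := by
    rw [show (1:ENNReal) = ENNReal.ofReal 1 by simp]
    exact (ENNReal.ofReal_lt_ofReal_iff (by norm_num)).2 (by linarith)
  exact absurd h1 (not_le.2 h2)

lemma incRearrange_nonneg (f : ℝ → ℝ) (hf0 : ∀ x ∈ Icc (0:ℝ) 1, 0 ≤ f x) {x : ℝ} (hx : 0 < x) :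
    0 ≤ incRearrange f x :=
  Real.sInf_nonneg (fun _ hs => mem_S_nonneg f hf0 hx hs)

lemma S_nonempty (f : ℝ → ℝ) (hf : Measurable f) {x : ℝ} (hx : x < 1) :
    {s : ℝ | volume {y ∈ Icc (0:ℝ) 1 | s ≤ f y} ≤ ENNReal.ofReal (1 - x)}.Nonempty := by
  set A : ℕ → Set ℝ := fun n => {y ∈ Icc (0:ℝ) 1 | (n:ℝ) ≤ f y} with hA
  have hAmeas : ∀ n, MeasurableSet (A n) :=
    fun n => measurableSet_Icc.inter (hf measurableSet_Ici)
  have hanti : Antitone A := by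
    intro m n hmn y hy
    exact ⟨hy.1, le_trans (Nat.cast_le.2 hmn) hy.2⟩
  have hinter : (⋂ n, A n) = ∅ := by
    ext y
    simp only [mem_iInter, mem_empty_iff_false, iff_false, not_forall]
    obtain ⟨n, hn⟩ := exists_nat_gt (f y)
    exact ⟨n, fun hy => absurd hy.2 (not_le.2 hn)⟩
  have htend : Tendsto (volume ∘ A) atTop (nhds 0) := by
    have := tendsto_measure_iInter_atTop (μ := volume)
      (fun n => (hAmeas n).nullMeasurableSet) hanti
      ⟨0, ((measure_mono (fun y hy => hy.1)).trans_lt (by simp [Real.volume_Icc])).ne⟩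
    rwa [hinter, measure_empty] at this
  have hpos : (0:ENNReal) < ENNReal.ofReal (1 - x) := ENNReal.ofReal_pos.2 (by linarith)
  obtain ⟨n, hn⟩ := (htend.eventually_lt_const hpos).exists
  exact ⟨(n:ℝ), le_of_lt hn⟩

lemma incRearrange_monotoneOn (f : ℝ → ℝ) (hf : Measurable f)
    (hf0 : ∀ x ∈ Icc (0:ℝ) 1, 0 ≤ f x) :
    MonotoneOn (incRearrange f) (Ioo (0:ℝ) 1) := by
  intro x hx y hy hxy
  apply csInf_le_csInf
  · exact ⟨0, fun s hs => mem_S_nonneg f hf0 hx.1 hs⟩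
  · exact S_nonempty f hf hy.2
  · intro s hs
    exact le_trans hs (ENNReal.ofReal_le_ofReal (by linarith))

lemma incRearrange_ge (f : ℝ → ℝ) (hf : Measurable f) {t x : ℝ} (hx : x < 1)
    (h : ENNReal.ofReal (1 - x) < volume {y ∈ Icc (0:ℝ) 1 | t ≤ f y}) :
    t ≤ incRearrange f x := by
  apply le_csInf (S_nonempty f hf hx)
  intro s hs
  by_contra hst
  push_neg at hst
  have hsub : {y ∈ Icc (0:ℝ) 1 | t ≤ f y} ⊆ {y ∈ Icc (0:ℝ) 1 | s ≤ f y} :=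
    fun y hy => ⟨hy.1, le_trans hst.le hy.2⟩
  exact absurd ((measure_mono hsub).trans hs) (not_le.2 h)

-- core lemma
lemma core_lemma (f : ℝ → ℝ) (hf : Measurable f) (hf0 : ∀ x ∈ Icc (0:ℝ) 1, 0 ≤ f x)
    {c : ℝ} (hc : c ∈ Icc (0:ℝ) 1) :
    ∫⁻ x in Icc c 1, ENNReal.ofReal (f x) ≤
      ∫⁻ x in Ioo c 1, ENNReal.ofReal (incRearrange f x) := by
  set F := incRearrange f with hF
  have hFae : AEMeasurable F (volume.restrict (Ioo c 1)) :=
    aemeasurable_restrict_of_monotoneOn measurableSet_Ioo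
      ((incRearrange_monotoneOn f hf hf0).mono
        (Ioo_subset_Ioo hc.1 le_rfl))
  have hfnn : 0 ≤ᵐ[volume.restrict (Icc c 1)] f := by
    refine (ae_restrict_iff' measurableSet_Icc).2 (Eventually.of_forall ?_)
    exact fun x hx => hf0 x ⟨hc.1.trans hx.1, hx.2⟩
  have hFnn : 0 ≤ᵐ[volume.restrict (Ioo c 1)] F := by
    refine (ae_restrict_iff' measurableSet_Ioo).2 (Eventually.of_forall ?_)
    exact fun x hx => incRearrange_nonneg f hf0 (hc.1.trans_lt hx.1)
  rw [lintegral_eq_lintegral_meas_le _ hfnn hf.aemeasurable,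
    lintegral_eq_lintegral_meas_le _ hFnn hFae]
  apply lintegral_mono
  intro t
  set D := volume {y ∈ Icc (0:ℝ) 1 | t ≤ f y} with hD
  have hD1 : D ≤ 1 := by
    calc D ≤ volume (Icc (0:ℝ) 1) := measure_mono (fun y hy => hy.1)
    _ = 1 := by simp [Real.volume_Icc]
  have hDtop : D ≠ ⊤ := (hD1.trans_lt (by norm_num)).ne
  have hL : (volume.restrict (Icc c 1)) {a | t ≤ f a} ≤ min (ENNReal.ofReal (1 - c)) D := by
    rw [Measure.restrict_apply' measurableSet_Icc]
    refine le_min ?_ ?_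
    · calc volume ({a | t ≤ f a} ∩ Icc c 1) ≤ volume (Icc c 1) :=
        measure_mono inter_subset_right
      _ = ENNReal.ofReal (1 - c) := Real.volume_Icc
    · refine measure_mono fun y hy => ⟨⟨hc.1.trans hy.2.1, hy.2.2⟩, hy.1⟩
  have hR : ENNReal.ofReal (1 - max c (1 - D.toReal)) ≤
      (volume.restrict (Ioo c 1)) {a | t ≤ F a} := by
    rw [Measure.restrict_apply' measurableSet_Ioo]
    rw [← Real.volume_Ioo]
    refine measure_mono fun x hx => ?_
    have hx1 : x < 1 := hx.2
    have hxc : c < x := (le_max_left _ _).trans_lt hx.1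
    have hxD : ENNReal.ofReal (1 - x) < D := by
      have h1 : 1 - D.toReal < x := (le_max_right _ _).trans_lt hx.1
      have : 1 - x < D.toReal := by linarith
      calc ENNReal.ofReal (1 - x) < ENNReal.ofReal D.toReal := by
            refine (ENNReal.ofReal_lt_ofReal_iff ?_).2 this
            exact lt_of_le_of_lt (by linarith) this
      _ = D := ENNReal.ofReal_toReal hDtop
    exact ⟨incRearrange_ge f hf hx1 hxD, hxc, hx1⟩
  refine hL.trans (le_trans ?_ hR)
  have key : 1 - max c (1 - D.toReal) = min (1 - c) D.toReal := by
    rw [← min_sub_sub_left]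
    congr 1
    ring
  rw [key]
  rcases le_total (1 - c) D.toReal with h | h
  · rw [min_eq_left h, min_eq_left (by
      rw [← ENNReal.ofReal_toReal hDtop]; exact ENNReal.ofReal_le_ofReal h)]
  · rw [min_eq_right h, min_eq_right (by
      rw [← ENNReal.ofReal_toReal hDtop]; exact ENNReal.ofReal_le_ofReal h),
      ENNReal.ofReal_toReal hDtop]

lemma inner_s (v : ENNReal) (b : ℝ) :
    ∫⁻ s in Ioi (0:ℝ), (if s ≤ b then v else 0) = v * ENNReal.ofReal b := by
  have h1 : (fun s : ℝ => if s ≤ b then v else 0) = (Iic b).indicator (fun _ => v) := by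
    ext s; simp [Set.indicator_apply]
  rw [h1, lintegral_indicator measurableSet_Iic, setLIntegral_const,
    Measure.restrict_apply measurableSet_Iic,
    show Iic b ∩ Ioi (0:ℝ) = Ioc 0 b by ext s; simp [mem_Ioc, and_comm],
    Real.volume_Ioc, sub_zero]

lemma swap_eq (h : ℝ → ℝ) (hh : Measurable h) (G : ℝ → ℝ) (hG : Measurable G)
    (X : Set ℝ) (hX : MeasurableSet X) :
    ∫⁻ x in X, ENNReal.ofReal (h x) * ENNReal.ofReal (G x) =
    ∫⁻ s in Ioi (0:ℝ), ∫⁻ x in {x | s ≤ G x} ∩ X, ENNReal.ofReal (h x) := by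
  have hmeas : Measurable (Function.uncurry fun (x s : ℝ) =>
      if s ≤ G x then ENNReal.ofReal (h x) else 0) := by
    apply Measurable.ite
    · exact measurableSet_le measurable_snd (hG.comp measurable_fst)
    · exact (ENNReal.measurable_ofReal.comp hh).comp measurable_fst
    · exact measurable_const
  calc ∫⁻ x in X, ENNReal.ofReal (h x) * ENNReal.ofReal (G x)
      = ∫⁻ x in X, ∫⁻ s in Ioi (0:ℝ), (if s ≤ G x then ENNReal.ofReal (h x) else 0) :=
        lintegral_congr fun x => (inner_s _ _).symm
    _ = ∫⁻ s in Ioi (0:ℝ), ∫⁻ x in X, (if s ≤ G x then ENNReal.ofReal (h x) else 0) :=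
        lintegral_lintegral_swap hmeas.aemeasurable
    _ = ∫⁻ s in Ioi (0:ℝ), ∫⁻ x in {x | s ≤ G x} ∩ X, ENNReal.ofReal (h x) := by
        refine lintegral_congr fun s => ?_
        have h2 : (fun x : ℝ => if s ≤ G x then ENNReal.ofReal (h x) else 0) =
            ({x | s ≤ G x}).indicator (fun x => ENNReal.ofReal (h x)) := by
          ext x; simp [Set.indicator_apply]
        have hms : MeasurableSet {x | s ≤ G x} := hG measurableSet_Ici
        rw [h2, lintegral_indicator hms, Measure.restrict_restrict hms]

lemma part2 (g : ℝ → ℝ) (hg : MonotoneOn g (Icc (0:ℝ) 1))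
    (hgr : ∀ x ∈ Icc (0:ℝ) 1, g x ∈ Icc (0:ℝ) 1)
    (f : ℝ → ℝ) (hf : Measurable f) (hf0 : ∀ x ∈ Icc (0:ℝ) 1, 0 ≤ f x) :
    ∫⁻ x in Icc (0:ℝ) 1, ENNReal.ofReal (f x * g x) ≤
      ∫⁻ x in Icc (0:ℝ) 1, ENNReal.ofReal (incRearrange f x * g x) := by
  set G : ℝ → ℝ := fun x => g (max 0 (min 1 x)) with hGdef
  have hproj : ∀ x : ℝ, max 0 (min 1 x) ∈ Icc (0:ℝ) 1 :=
    fun x => ⟨le_max_left _ _, max_le (by norm_num) (min_le_left _ _)⟩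
  have hGmono : Monotone G :=
    fun a b hab => hg (hproj a) (hproj b) (max_le_max le_rfl (min_le_min le_rfl hab))
  have hGmeas : Measurable G := hGmono.measurable
  have hGeq : ∀ x ∈ Icc (0:ℝ) 1, G x = g x := by
    intro x hx
    simp only [hGdef]
    rw [min_eq_right hx.2, max_eq_right hx.1]
  set F := incRearrange f with hFdef
  have hFae : AEMeasurable F (volume.restrict (Ioo (0:ℝ) 1)) :=
    aemeasurable_restrict_of_monotoneOn measurableSet_Ioo (incRearrange_monotoneOn f hf hf0)
  set F' := hFae.mk F with hF'def
  have hF'meas : Measurable F' := hFae.measurable_mk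
  have hFF' : F =ᵐ[volume.restrict (Ioo (0:ℝ) 1)] F' := hFae.ae_eq_mk
  have hL : ∫⁻ x in Icc (0:ℝ) 1, ENNReal.ofReal (f x * g x) =
      ∫⁻ x in Icc (0:ℝ) 1, ENNReal.ofReal (f x) * ENNReal.ofReal (G x) := by
    refine setLIntegral_congr_fun measurableSet_Icc (fun x hx => ?_)
    rw [← hGeq x hx, ENNReal.ofReal_mul (hf0 x hx)]
  have hR1 : ∫⁻ x in Ioo (0:ℝ) 1, ENNReal.ofReal (F' x) * ENNReal.ofReal (G x) ≤
      ∫⁻ x in Icc (0:ℝ) 1, ENNReal.ofReal (F x * g x) := by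
    have heq : ∫⁻ x in Ioo (0:ℝ) 1, ENNReal.ofReal (F' x) * ENNReal.ofReal (G x) =
        ∫⁻ x in Ioo (0:ℝ) 1, ENNReal.ofReal (F x * g x) := by
      apply lintegral_congr_ae
      filter_upwards [hFF', ae_restrict_mem measurableSet_Ioo] with x hx1 hx2
      have hxI : x ∈ Icc (0:ℝ) 1 := ⟨hx2.1.le, hx2.2.le⟩
      rw [← hx1, hGeq x hxI, ENNReal.ofReal_mul (incRearrange_nonneg f hf0 hx2.1)]
    rw [heq]
    exact lintegral_mono_set Ioo_subset_Icc_self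
  rw [hL, swap_eq f hf G hGmeas _ measurableSet_Icc]
  refine le_trans ?_ hR1
  rw [swap_eq F' hF'meas G hGmeas _ measurableSet_Ioo]
  apply lintegral_mono
  intro s
  dsimp only
  have hU : MeasurableSet {x : ℝ | s ≤ G x} := hGmeas measurableSet_Ici
  have hcongr : ∫⁻ x in {x : ℝ | s ≤ G x} ∩ Ioo (0:ℝ) 1, ENNReal.ofReal (F' x) =
      ∫⁻ x in {x : ℝ | s ≤ G x} ∩ Ioo (0:ℝ) 1, ENNReal.ofReal (F x) := by
    apply lintegral_congr_ae
    rw [← Measure.restrict_restrict hU]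
    exact ((hFF'.symm).filter_mono (ae_mono Measure.restrict_le_self)).fun_comp ENNReal.ofReal
  rw [hcongr]
  rcases eq_empty_or_nonempty ({x : ℝ | s ≤ G x} ∩ Icc (0:ℝ) 1) with hUe | hUne
  · rw [hUe]
    simp
  · set c := sInf ({x : ℝ | s ≤ G x} ∩ Icc (0:ℝ) 1) with hcdef
    have hbdd : BddBelow ({x : ℝ | s ≤ G x} ∩ Icc (0:ℝ) 1) := ⟨0, fun a ha => ha.2.1⟩
    have hc0 : 0 ≤ c := le_csInf hUne (fun a ha => ha.2.1)
    obtain ⟨a0, ha0⟩ := hUne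
    have hc1 : c ≤ 1 := (csInf_le hbdd ha0).trans ha0.2.2
    have hsub1 : {x : ℝ | s ≤ G x} ∩ Icc (0:ℝ) 1 ⊆ Icc c 1 :=
      fun a ha => ⟨csInf_le hbdd ha, ha.2.2⟩
    have hsub2 : Ioo c 1 ⊆ {x : ℝ | s ≤ G x} ∩ Ioo (0:ℝ) 1 := by
      intro x hx
      obtain ⟨a, ha, hax⟩ := (csInf_lt_iff hbdd ⟨a0, ha0⟩).1 hx.1
      exact ⟨le_trans ha.1 (hGmono hax.le), hc0.trans_lt hx.1, hx.2⟩
    calc ∫⁻ x in {x : ℝ | s ≤ G x} ∩ Icc (0:ℝ) 1, ENNReal.ofReal (f x)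
        ≤ ∫⁻ x in Icc c 1, ENNReal.ofReal (f x) := lintegral_mono_set hsub1
      _ ≤ ∫⁻ x in Ioo c 1, ENNReal.ofReal (F x) := core_lemma f hf hf0 ⟨hc0, hc1⟩
      _ ≤ ∫⁻ x in {x : ℝ | s ≤ G x} ∩ Ioo (0:ℝ) 1, ENNReal.ofReal (F x) :=
          lintegral_mono_set hsub2


/-- If `g : [0,1] → [0,1]` is increasing, then its increasing rearrangement equals `g`
almost everywhere on `[0,1]`; in particular `∫₀¹ f g ≤ ∫₀¹ f⁺ g` for any non-negative
measurable `f` on `[0,1]`. -/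
theorem incRearrange_of_monotone (g : ℝ → ℝ)
    (hg : MonotoneOn g (Icc (0:ℝ) 1))
    (hgr : ∀ x ∈ Icc (0:ℝ) 1, g x ∈ Icc (0:ℝ) 1) :
    (∀ᵐ x ∂(volume.restrict (Icc (0:ℝ) 1)), incRearrange g x = g x) ∧
    (∀ f : ℝ → ℝ, Measurable f → (∀ x ∈ Icc (0:ℝ) 1, 0 ≤ f x) →
      ∫⁻ x in Icc (0:ℝ) 1, ENNReal.ofReal (f x * g x) ≤
        ∫⁻ x in Icc (0:ℝ) 1, ENNReal.ofReal (incRearrange f x * g x)) :=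
  ⟨part1 g hg hgr, fun f hf hf0 => part2 g hg hgr f hf hf0⟩
end

section
/- Let r: [0,1] → ℝ be strictly increasing and differentiable with 0 < r(1) ≤ 1 and ∫₀¹ r(x) dx ≥ 0. Define s(1) = r(1) and s(x) = (∫ₓ¹ r(z) dz)/(1 - x) for x < 1. Then s is non-negative, differentiable on [0,1), satisfies s(x) ≤ 1 for all x, and satisfies r(x) = s(x) - (1 - x)·s'(x) for all x ∈ [0,1). -/
open MeasureTheory Set intervalIntegral

open scoped Topology

/-!
Write `s` as the tail average `x ↦ (∫ₓ¹ r) / (1 - x)`. Monotonicity of `r` bounds this average by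
`r 1 ≤ 1`. It is non-negative because either `r x ≥ 0`, so `r ≥ 0` on `[x, 1]`, or `r x < 0`, so
`∫₀ˣ r ≤ 0` and `∫ₓ¹ r = ∫₀¹ r - ∫₀ˣ r ≥ 0`. The fundamental theorem of calculus gives
`s' x = (s x - r x) / (1 - x)`, which is the identity `r = s - (1 - x) s'`.
-/

theorem MonotoneOn.mul_le_intervalIntegral {f : ℝ → ℝ} {a b : ℝ} (hab : a ≤ b)
    (hf : MonotoneOn f (Icc a b)) : (b - a) * f a ≤ ∫ x in a..b, f x := by
  calc (b - a) * f a = ∫ _ in a..b, f a := by simp [mul_comm]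
    _ ≤ ∫ x in a..b, f x := integral_mono_on hab intervalIntegrable_const
      (uIcc_of_le hab ▸ hf).intervalIntegrable fun x hx => hf ⟨le_rfl, hab⟩ hx hx.1

theorem MonotoneOn.intervalIntegral_le_mul {f : ℝ → ℝ} {a b : ℝ} (hab : a ≤ b)
    (hf : MonotoneOn f (Icc a b)) : ∫ x in a..b, f x ≤ (b - a) * f b := by
  calc ∫ x in a..b, f x ≤ ∫ _ in a..b, f b := integral_mono_on hab
        (uIcc_of_le hab ▸ hf).intervalIntegrable intervalIntegrable_const
        fun x hx => hf hx ⟨hab, le_rfl⟩ hx.2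
    _ = (b - a) * f b := by simp [mul_comm]

theorem MonotoneOn.intervalIntegral_tail_nonneg {f : ℝ → ℝ} {a x b : ℝ}
    (hf : MonotoneOn f (Icc a b)) (hax : a ≤ x) (hxb : x ≤ b) (h : 0 ≤ ∫ z in a..b, f z) :
    0 ≤ ∫ z in x..b, f z := by
  rcases le_or_gt 0 (f x) with hfx | hfx
  · calc 0 ≤ (b - x) * f x := mul_nonneg (sub_nonneg.2 hxb) hfx
      _ ≤ ∫ z in x..b, f z := (hf.mono (Icc_subset_Icc_left hax)).mul_le_intervalIntegral hxb
  · have head : ∫ z in a..x, f z ≤ (x - a) * f x :=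
      (hf.mono (Icc_subset_Icc_right hxb)).intervalIntegral_le_mul hax
    have hsplit : (∫ z in a..x, f z) + ∫ z in x..b, f z = ∫ z in a..b, f z :=
      integral_add_adjacent_intervals
        (uIcc_of_le hax ▸ hf.mono (Icc_subset_Icc_right hxb)).intervalIntegrable
        (uIcc_of_le hxb ▸ hf.mono (Icc_subset_Icc_left hax)).intervalIntegrable
    nlinarith [mul_nonpos_of_nonneg_of_nonpos (sub_nonneg.2 hax) hfx.le]

noncomputable def tailAverage (f : ℝ → ℝ) (b x : ℝ) : ℝ :=
  (∫ z in x..b, f z) / (b - x)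

section tailAverage

variable {f : ℝ → ℝ} {a b x : ℝ}

theorem tailAverage_nonneg (hf : MonotoneOn f (Icc a b)) (hax : a ≤ x) (hxb : x ≤ b)
    (h : 0 ≤ ∫ z in a..b, f z) : 0 ≤ tailAverage f b x :=
  div_nonneg (hf.intervalIntegral_tail_nonneg hax hxb h) (sub_nonneg.2 hxb)

theorem tailAverage_le (hf : MonotoneOn f (Icc x b)) (hxb : x < b) : tailAverage f b x ≤ f b := by
  rw [tailAverage, div_le_iff₀' (sub_pos.2 hxb)]
  exact hf.intervalIntegral_le_mul hxb.le

theorem hasDerivWithinAt_tailAverage (hf : ContinuousOn f (Icc a b)) (hx : x ∈ Ico a b) :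
    HasDerivWithinAt (tailAverage f b) ((tailAverage f b x - f x) / (b - x)) (Icc a b) x := by
  have hxI : x ∈ Icc a b := Ico_subset_Icc_self hx
  have : Fact (x ∈ Icc a b) := ⟨hxI⟩
  have hint : IntervalIntegrable f volume x b :=
    (hf.mono (uIcc_subset_Icc hxI (right_mem_Icc.2 (hx.1.trans hx.2.le)))).intervalIntegrable
  have hmeas : StronglyMeasurableAtFilter f (𝓝[Icc a b] x) volume :=
    ⟨Icc a b, self_mem_nhdsWithin, hf.aestronglyMeasurable measurableSet_Icc⟩
  have hF : HasDerivWithinAt (fun u => ∫ z in u..b, f z) (-f x) (Icc a b) x :=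
    integral_hasDerivWithinAt_left hint hmeas (hf.continuousWithinAt hxI)
  have hlen : HasDerivWithinAt (fun u => b - u) (-1) (Icc a b) x := by
    simpa using (hasDerivWithinAt_id x (Icc a b)).const_sub b
  have hbx : b - x ≠ 0 := (sub_pos.2 hx.2).ne'
  refine (hF.div hlen hbx).congr_deriv ?_
  rw [tailAverage]
  field_simp
  ring

end tailAverage

/-- Let `r : [0,1] → ℝ` be strictly increasing and differentiable with `0 < r 1 ≤ 1` and
`∫₀¹ r ≥ 0`. Define `s 1 = r 1` and `s x = (∫ₓ¹ r) / (1 - x)` for `x < 1`. Then `s` is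
non-negative, differentiable on `[0,1)`, bounded by `1`, and satisfies
`r x = s x - (1 - x) * s' x` on `[0,1)`. -/
theorem stmt3 (r s : ℝ → ℝ)
    (hr : StrictMonoOn r (Icc (0:ℝ) 1))
    (hrd : ∀ x ∈ Icc (0:ℝ) 1, DifferentiableWithinAt ℝ r (Icc (0:ℝ) 1) x)
    (hr1 : 0 < r 1) (hr1' : r 1 ≤ 1)
    (hrint : 0 ≤ ∫ x in (0:ℝ)..1, r x)
    (hs1 : s 1 = r 1)
    (hs : ∀ x ∈ Ico (0:ℝ) 1, s x = (∫ z in x..1, r z) / (1 - x)) :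
    (∀ x ∈ Icc (0:ℝ) 1, 0 ≤ s x) ∧
    (∀ x ∈ Ico (0:ℝ) 1, DifferentiableWithinAt ℝ s (Ico (0:ℝ) 1) x) ∧
    (∀ x ∈ Icc (0:ℝ) 1, s x ≤ 1) ∧
    (∀ x ∈ Ico (0:ℝ) 1, r x = s x - (1 - x) * derivWithin s (Ico (0:ℝ) 1) x) := by
  have hmono : MonotoneOn r (Icc 0 1) := hr.monotoneOn
  have hcont : ContinuousOn r (Icc 0 1) := fun x hx => (hrd x hx).continuousWithinAt
  have hs' : ∀ x ∈ Ico (0:ℝ) 1, s x = tailAverage r 1 x := hs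
  have hderiv : ∀ x ∈ Ico (0:ℝ) 1, HasDerivWithinAt s ((s x - r x) / (1 - x)) (Ico 0 1) x := by
    intro x hx
    rw [hs' x hx]
    exact ((hasDerivWithinAt_tailAverage hcont hx).mono Ico_subset_Icc_self).congr hs' (hs' x hx)
  refine ⟨fun x hx => ?_, fun x hx => (hderiv x hx).differentiableWithinAt, fun x hx => ?_,
    fun x hx => ?_⟩
  · rcases hx.2.eq_or_lt with rfl | hx1
    · exact hs1 ▸ hr1.le
    · exact hs' x ⟨hx.1, hx1⟩ ▸ tailAverage_nonneg hmono hx.1 hx.2 hrint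
  · rcases hx.2.eq_or_lt with rfl | hx1
    · exact hs1 ▸ hr1'
    · rw [hs' x ⟨hx.1, hx1⟩]
      exact (tailAverage_le (hmono.mono (Icc_subset_Icc_left hx.1)) hx1).trans hr1'
  · rw [(hderiv x hx).derivWithin (uniqueDiffOn_Ico 0 1 x hx)]
    field_simp [(sub_pos.2 hx.2).ne']
    ring
end

section
/- Weak duality for the bid-discount revenue problem: let Pᵢ(α) denote the expected payment of buyer i under parameter α ∈ [0,1]ⁿ and W(α) the seller's revenue (both linear combinations of indicator integrals as defined below). Then the optimal value of max{W(α) : α ∈ [0,1]ⁿ, Pᵢ(α) ≤ ρᵢ ∀i} is at most min_{τ∈[0,1]ⁿ} ( E_q[max_i ((1-τᵢ)ṽᵢ(qᵢ) - λ)⁺] + Σᵢ τᵢρᵢ ). -/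
open MeasureTheory Set

/-- The box `[0,1]ⁿ` of quantile/parameter profiles. -/
def box (n : ℕ) : Set (Fin n → ℝ) := Set.univ.pi fun _ => Icc (0:ℝ) 1

/-- Winning indicator of buyer `i` in the bid-discount first-price auction:
`Φᵢ(α,q) = 1` iff `αᵢ ṽᵢ(qᵢ) ≥ max(max_{j≠i} αⱼ ṽⱼ(qⱼ), λ)`. -/
noncomputable def Phi (n : ℕ) (v : Fin n → ℝ → ℝ) (lam : ℝ) (i : Fin n)
    (α q : Fin n → ℝ) : ℝ :=
  if max (⨆ j, if j = i then 0 else α j * v j (q j)) lam ≤ α i * v i (q i) then 1 else 0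

/-- Expected payment of buyer `i` under parameter `α`:
`Pᵢ(α) = ∫_{[0,1]ⁿ} ṽᵢ(qᵢ) Φᵢ(α,q) dq`. -/
noncomputable def payment (n : ℕ) (v : Fin n → ℝ → ℝ) (lam : ℝ) (i : Fin n)
    (α : Fin n → ℝ) : ℝ :=
  ∫ q in box n, v i (q i) * Phi n v lam i α q

/-- Seller's revenue: `W(α) = Σᵢ ∫_{[0,1]ⁿ} (ṽᵢ(qᵢ) - λ) Φᵢ(α,q) dq`. -/
noncomputable def revenue (n : ℕ) (v : Fin n → ℝ → ℝ) (lam : ℝ)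
    (α : Fin n → ℝ) : ℝ :=
  ∑ i, ∫ q in box n, (v i (q i) - lam) * Phi n v lam i α q

/-- Lagrangian dual objective:
`E_q[maxᵢ ((1-τᵢ)ṽᵢ(qᵢ) - λ)⁺] + Σᵢ τᵢ ρᵢ`. -/
noncomputable def dualObj (n : ℕ) (v : Fin n → ℝ → ℝ) (lam : ℝ) (ρ : Fin n → ℝ)
    (τ : Fin n → ℝ) : ℝ :=
  (∫ q in box n, ⨆ i, max 0 ((1 - τ i) * v i (q i) - lam)) + ∑ i, τ i * ρ i

/-!
Write `bᵢ(q) = (1 - τᵢ) ṽᵢ(qᵢ) - λ`. Since `ṽᵢ(qᵢ) - λ = bᵢ(q) + τᵢ ṽᵢ(qᵢ)`, the revenue splits as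
`∫ Σᵢ bᵢ Φᵢ + Σᵢ τᵢ Pᵢ(α)`, and the budget constraints bound the second sum by `Σᵢ τᵢ ρᵢ`.
For the first, strict monotonicity of the `ṽᵢ` makes ties `αᵢ ṽᵢ(qᵢ) = αⱼ ṽⱼ(qⱼ)` a null set
(each slice in the coordinate `qᵢ` is at most a point), so almost surely at most one `Φᵢ` equals
`1` and `Σᵢ bᵢ Φᵢ ≤ maxᵢ bᵢ⁺`.
-/

theorem MeasureTheory.Measure.pi_eq_zero_of_forall_update {ι : Type*} [Fintype ι]
    [DecidableEq ι] {X : ι → Type*} [∀ i, MeasurableSpace (X i)] (μ : ∀ i, Measure (X i))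
    [∀ i, SigmaFinite (μ i)] (i : ι) {s : Set (∀ i, X i)} (hs : MeasurableSet s)
    (h : ∀ x, μ i {t | Function.update x i t ∈ s} = 0) : Measure.pi μ s = 0 := by
  rcases isEmpty_or_nonempty (∀ i, X i) with hX | ⟨⟨x⟩⟩
  · exact Subsingleton.elim s ∅ ▸ measure_empty
  have hslice : (fun y ↦ ∫⁻ t, s.indicator 1 (Function.update y i t) ∂μ i) = 0 := by
    ext y
    rw [Pi.zero_apply, ← h y]
    exact lintegral_indicator_one (measurable_update y hs)
  have hmarg := congrFun (lmarginal_univ (μ := μ) (f := s.indicator 1)) x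
  rw [← Finset.insert_erase (Finset.mem_univ i),
    lmarginal_insert' _ (measurable_one.indicator hs) (Finset.notMem_erase i _), hslice] at hmarg
  simpa [lmarginal, lintegral_indicator_one hs] using hmarg.symm

theorem Finset.sum_mul_le_iSup_max_zero {ι : Type*} [Fintype ι] (c φ : ι → ℝ)
    (hφ : ∀ i, φ i = 0 ∨ φ i = 1) (huniq : ∀ i j, φ i = 1 → φ j = 1 → i = j) :
    ∑ i, c i * φ i ≤ ⨆ i, max 0 (c i) := by
  by_cases hwin : ∃ i, φ i = 1
  · obtain ⟨i, hi⟩ := hwin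
    have hsum : ∑ j, c j * φ j = c i := by
      rw [Finset.sum_eq_single i (fun j _ hji => ?_) (by simp), hi, mul_one]
      rw [(hφ j).resolve_right fun hj => hji (huniq j i hj hi), mul_zero]
    rw [hsum]
    exact (le_max_right 0 (c i)).trans
      (le_ciSup (f := fun j => max 0 (c j)) (finite_range _).bddAbove i)
  · push Not at hwin
    rw [Finset.sum_eq_zero fun i _ => by rw [(hφ i).resolve_right (hwin i), mul_zero]]
    exact Real.iSup_nonneg fun i => le_max_left _ _

section Box

variable {n : ℕ}

theorem measurableSet_box (n : ℕ) : MeasurableSet (box n) :=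
  MeasurableSet.univ_pi fun _ => measurableSet_Icc

instance isFiniteMeasure_restrict_box (n : ℕ) : IsFiniteMeasure (volume.restrict (box n)) :=
  isFiniteMeasure_restrict.2 (isCompact_univ_pi fun _ => isCompact_Icc).measure_lt_top.ne

theorem integrableOn_box {f : (Fin n → ℝ) → ℝ} (hf : Measurable f) (C : ℝ)
    (hC : ∀ q ∈ box n, |f q| ≤ C) : IntegrableOn f (box n) :=
  Integrable.of_bound hf.aestronglyMeasurable C <|
    (ae_restrict_iff' (measurableSet_box n)).2 (ae_of_all _ hC)

theorem ae_restrict_box_apply_ne {i j : Fin n} (hij : i ≠ j) {f g : ℝ → ℝ} (hf : Measurable f)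
    (hg : Measurable g) (hinj : InjOn f (Icc 0 1)) :
    ∀ᵐ q ∂volume.restrict (box n), f (q i) ≠ g (q j) := by
  rw [ae_restrict_iff' (measurableSet_box n), ae_iff]
  simp only [Classical.not_imp, not_not]
  have hmeas : MeasurableSet {q : Fin n → ℝ | q ∈ box n ∧ f (q i) = g (q j)} :=
    (measurableSet_box n).inter <|
      measurableSet_eq_fun (hf.comp (measurable_pi_apply i)) (hg.comp (measurable_pi_apply j))
  rw [volume_pi]
  refine Measure.pi_eq_zero_of_forall_update _ i hmeas fun x => ?_
  refine Subsingleton.measure_zero (fun s hs t ht => ?_) _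
  simp only [mem_ofPred_eq, Function.update_self, Function.update_of_ne hij.symm] at hs ht
  refine hinj ?_ ?_ (hs.2.trans ht.2.symm)
  · simpa using hs.1 i trivial
  · simpa using ht.1 i trivial

end Box

section Phi

variable {n : ℕ} {v w : Fin n → ℝ → ℝ} {lam : ℝ} {i j : Fin n} {α q : Fin n → ℝ}

theorem Phi_eq_zero_or_eq_one : Phi n v lam i α q = 0 ∨ Phi n v lam i α q = 1 := by
  unfold Phi
  split_ifs <;> simp

theorem le_of_Phi_eq_one (h : Phi n v lam i α q = 1) :
    max (⨆ j, if j = i then 0 else α j * v j (q j)) lam ≤ α i * v i (q i) := by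
  by_contra hlt
  simp [Phi, hlt] at h

theorem lam_le_of_Phi_eq_one (h : Phi n v lam i α q = 1) : lam ≤ α i * v i (q i) :=
  (le_max_right _ _).trans (le_of_Phi_eq_one h)

theorem mul_le_of_Phi_eq_one (hji : j ≠ i) (h : Phi n v lam i α q = 1) :
    α j * v j (q j) ≤ α i * v i (q i) :=
  calc α j * v j (q j) = if j = i then 0 else α j * v j (q j) := (if_neg hji).symm
    _ ≤ ⨆ k, if k = i then 0 else α k * v k (q k) :=
      le_ciSup (f := fun k => if k = i then 0 else α k * v k (q k)) (finite_range _).bddAbove j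
    _ ≤ α i * v i (q i) := (le_max_left _ _).trans (le_of_Phi_eq_one h)

theorem Phi_congr (h : ∀ j, v j (q j) = w j (q j)) :
    Phi n v lam i α q = Phi n w lam i α q := by
  simp only [Phi, h]

theorem measurable_Phi (hv : ∀ j, Measurable (v j)) : Measurable (Phi n v lam i α) := by
  have hbid (j : Fin n) : Measurable fun q : Fin n → ℝ => α j * v j (q j) :=
    ((hv j).comp (measurable_pi_apply j)).const_mul _
  refine Measurable.ite (measurableSet_le (Measurable.max ?_ measurable_const) (hbid i))
    measurable_const measurable_const
  exact Measurable.iSup fun j => by split_ifs; exacts [measurable_const, hbid j]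

theorem integrableOn_mul_Phi (hv : ∀ j, Measurable (v j)) {f : ℝ → ℝ} (hf : Measurable f)
    (C : ℝ) (hC : ∀ x ∈ Icc (0 : ℝ) 1, |f x| ≤ C) :
    IntegrableOn (fun q => f (q i) * Phi n v lam i α q) (box n) := by
  refine integrableOn_box ((hf.comp (measurable_pi_apply i)).mul (measurable_Phi hv)) C
    fun q hq => ?_
  have hfq := hC (q i) (hq i trivial)
  rcases Phi_eq_zero_or_eq_one (v := v) (lam := lam) (i := i) (α := α) (q := q) with h | h
  · simpa [h] using (abs_nonneg _).trans hfq
  · simpa [h] using hfq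

theorem ae_eq_of_Phi_eq_one (hv : ∀ j, Measurable (v j)) (hinj : ∀ j, InjOn (v j) (Icc 0 1))
    (hlam : 0 < lam) (i j : Fin n) :
    ∀ᵐ q ∂volume.restrict (box n), Phi n v lam i α q = 1 → Phi n v lam j α q = 1 → i = j := by
  rcases eq_or_ne i j with rfl | hij
  · exact ae_of_all _ fun _ _ _ => rfl
  by_cases hαi : α i = 0
  · refine ae_of_all _ fun q hi => absurd (lam_le_of_Phi_eq_one hi) ?_
    simpa [hαi] using hlam
  have hinj' : InjOn (fun x => α i * v i x) (Icc 0 1) := fun x hx y hy hxy =>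
    hinj i hx hy (mul_left_cancel₀ hαi hxy)
  filter_upwards [ae_restrict_box_apply_ne hij ((hv i).const_mul (α i))
    ((hv j).const_mul (α j)) hinj'] with q hq hi hj
  exact (hq (le_antisymm (mul_le_of_Phi_eq_one hij hj) (mul_le_of_Phi_eq_one hij.symm hi))).elim

theorem ae_sum_mul_Phi_le (hv : ∀ j, Measurable (v j)) (hinj : ∀ j, InjOn (v j) (Icc 0 1))
    (hlam : 0 < lam) (c : Fin n → (Fin n → ℝ) → ℝ) :
    ∀ᵐ q ∂volume.restrict (box n),
      ∑ i, c i q * Phi n v lam i α q ≤ ⨆ i, max 0 (c i q) := by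
  have huniq := ae_all_iff.2 fun i => ae_all_iff.2 (ae_eq_of_Phi_eq_one hv hinj hlam (α := α) i)
  filter_upwards [huniq] with q hq
  exact Finset.sum_mul_le_iSup_max_zero _ _ (fun i => Phi_eq_zero_or_eq_one) hq

end Phi

section Duality

variable {n : ℕ} {v w : Fin n → ℝ → ℝ} {lam : ℝ} {ρ α τ : Fin n → ℝ}

theorem payment_congr (h : ∀ j, EqOn (v j) (w j) (Icc 0 1)) (i : Fin n) :
    payment n v lam i α = payment n w lam i α :=
  setIntegral_congr_fun (measurableSet_box n) fun q hq => by
    rw [h i (hq i trivial), Phi_congr fun j => h j (hq j trivial)]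

theorem revenue_congr (h : ∀ j, EqOn (v j) (w j) (Icc 0 1)) :
    revenue n v lam α = revenue n w lam α :=
  Finset.sum_congr rfl fun i _ => setIntegral_congr_fun (measurableSet_box n) fun q hq => by
    rw [h i (hq i trivial), Phi_congr fun j => h j (hq j trivial)]

theorem dualObj_congr (h : ∀ j, EqOn (v j) (w j) (Icc 0 1)) :
    dualObj n v lam ρ τ = dualObj n w lam ρ τ := by
  rw [dualObj, dualObj, setIntegral_congr_fun (measurableSet_box n) fun q hq => ?_]
  simp only [h _ (hq _ trivial)]

theorem integrableOn_one_sub_mul_sub_mul_Phi (hvm : ∀ j, Measurable (v j))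
    (hvr : ∀ j, MapsTo (v j) (Icc 0 1) (Icc 0 1)) (hτ : τ ∈ box n) (i : Fin n) :
    IntegrableOn (fun q => ((1 - τ i) * v i (q i) - lam) * Phi n v lam i α q) (box n) := by
  refine integrableOn_mul_Phi hvm (((hvm i).const_mul _).sub_const lam) (1 + |lam|)
    fun x hx => (abs_sub _ _).trans ?_
  have hdisc := unitInterval.mul_mem (Icc.mem_iff_one_sub_mem.mp (hτ i trivial)) (hvr i hx)
  rw [abs_of_nonneg hdisc.1]
  linarith [hdisc.2]

theorem integrableOn_iSup_max_zero (hvm : ∀ j, Measurable (v j))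
    (hvr : ∀ j, MapsTo (v j) (Icc 0 1) (Icc 0 1)) (hlam : 0 ≤ lam) (hτ : τ ∈ box n) :
    IntegrableOn (fun q => ⨆ i, max 0 ((1 - τ i) * v i (q i) - lam)) (box n) := by
  refine integrableOn_box (Measurable.iSup fun i => measurable_const.max
    ((((hvm i).comp (measurable_pi_apply i)).const_mul _).sub_const lam)) 1 fun q hq => ?_
  rw [abs_of_nonneg (Real.iSup_nonneg fun i => le_max_left _ _)]
  refine Real.iSup_le (fun i => max_le zero_le_one ?_) zero_le_one
  have hdisc :=
    unitInterval.mul_mem (Icc.mem_iff_one_sub_mem.mp (hτ i trivial)) (hvr i (hq i trivial))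
  linarith [hdisc.2]

theorem revenue_eq_integral_add_sum_payment (hvm : ∀ j, Measurable (v j))
    (hvr : ∀ j, MapsTo (v j) (Icc 0 1) (Icc 0 1)) (hτ : τ ∈ box n) :
    revenue n v lam α = (∫ q in box n, ∑ i, ((1 - τ i) * v i (q i) - lam) * Phi n v lam i α q)
      + ∑ i, τ i * payment n v lam i α := by
  have hint := integrableOn_one_sub_mul_sub_mul_Phi (lam := lam) (α := α) hvm hvr hτ
  rw [integral_finsetSum _ fun i _ => hint i, ← Finset.sum_add_distrib]
  refine Finset.sum_congr rfl fun i _ => ?_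
  have hpay : IntegrableOn (fun q => v i (q i) * Phi n v lam i α q) (box n) :=
    integrableOn_mul_Phi hvm (hvm i) 1 fun x hx =>
      abs_le.2 ⟨by linarith [(hvr i hx).1], (hvr i hx).2⟩
  rw [payment, ← integral_const_mul, ← integral_add (hint i) (hpay.const_mul _)]
  exact integral_congr_ae (ae_of_all _ fun q => by ring)

theorem revenue_le_dualObj (hvm : ∀ j, Measurable (v j)) (hinj : ∀ j, InjOn (v j) (Icc 0 1))
    (hvr : ∀ j, MapsTo (v j) (Icc 0 1) (Icc 0 1)) (hlam : 0 < lam)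
    (hP : ∀ i, payment n v lam i α ≤ ρ i) (hτ : τ ∈ box n) :
    revenue n v lam α ≤ dualObj n v lam ρ τ := by
  rw [revenue_eq_integral_add_sum_payment hvm hvr hτ, dualObj]
  refine add_le_add (integral_mono_ae ?_ (integrableOn_iSup_max_zero hvm hvr hlam.le hτ)
    (ae_sum_mul_Phi_le hvm hinj hlam fun i q => (1 - τ i) * v i (q i) - lam))
    (Finset.sum_le_sum fun i _ => mul_le_mul_of_nonneg_left (hP i) (hτ i trivial).1)
  exact integrable_finsetSum _ fun i _ => integrableOn_one_sub_mul_sub_mul_Phi hvm hvr hτ i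

end Duality

theorem weak_duality_BDFPA_general (n : ℕ) (v : Fin n → ℝ → ℝ) (lam : ℝ) (ρ : Fin n → ℝ)
    (hv : ∀ i, StrictMonoOn (v i) (Icc (0:ℝ) 1))
    (hvr : ∀ i, ∀ q ∈ Icc (0:ℝ) 1, v i q ∈ Icc (0:ℝ) 1)
    (hlam : lam ∈ Ioo (0:ℝ) 1) :
    ∀ α ∈ box n, (∀ i, payment n v lam i α ≤ ρ i) →
      ∀ τ ∈ box n, revenue n v lam α ≤ dualObj n v lam ρ τ := by
  intro α _ hP τ hτ
  -- off `[0,1]` the `v i` are arbitrary, possibly non-measurable; the integrals only see `[0,1]`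
  choose w hwm hvw using fun i => (hv i).monotoneOn.exists_monotone_extension
    (bddBelow_Icc.mono (MapsTo.image_subset (hvr i)))
    (bddAbove_Icc.mono (MapsTo.image_subset (hvr i)))
  rw [revenue_congr hvw, dualObj_congr hvw]
  exact revenue_le_dualObj (fun i => (hwm i).measurable) (fun i => (hv i).injOn.congr (hvw i))
    (fun i x hx => hvw i hx ▸ hvr i x hx) hlam.1 (fun i => payment_congr hvw i ▸ hP i) hτ

/-- Weak duality for the bid-discount revenue problem: the revenue of every
budget-feasible `α ∈ [0,1]ⁿ` is at most the dual objective at every `τ ∈ [0,1]ⁿ`; hence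
the optimal primal value is at most the minimal dual value. -/
theorem weak_duality_BDFPA (n : ℕ) (v : Fin n → ℝ → ℝ) (lam : ℝ) (ρ : Fin n → ℝ)
    (hv : ∀ i, StrictMonoOn (v i) (Icc (0:ℝ) 1))
    (hvr : ∀ i, ∀ q ∈ Icc (0:ℝ) 1, v i q ∈ Icc (0:ℝ) 1)
    (hlam : lam ∈ Ioo (0:ℝ) 1) (hρ : ∀ i, ρ i ∈ Ioc (0:ℝ) 1) :
    ∀ α ∈ box n, (∀ i, payment n v lam i α ≤ ρ i) →
      ∀ τ ∈ box n, revenue n v lam α ≤ dualObj n v lam ρ τ :=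
  weak_duality_BDFPA_general n v lam ρ hv hvr hlam
end

section
/- In the symmetric pacing second-price auction with n buyers having common increasing, inverse Lipschitz continuous bidding quantile function ṽ₀: [0,1] → [0,1] and common budget ρ₀ > 0, the common expected payment p(ξ₀) = ∫_{[0,1]ⁿ} max(ξ₀·max_{j≠i} ṽ₀(qⱼ), λ)·Φᵢ((ξ₀,…,ξ₀), q) dq is an increasing continuous function of ξ₀ on [0,1]; hence either p(1) < ρ₀ (and ξ₀ = 1 is budget-extracting) or there exists ξ₀* ∈ (0,1] with p(ξ₀*) = ρ₀. -/
open MeasureTheory Set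

lemma hyperplane_null (n : ℕ) (i : Fin n) (a : ℝ) :
    volume {q : Fin n → ℝ | q i = a} = 0 := by
  rw [volume_pi]
  exact Measure.pi_hyperplane (fun _ => (volume : Measure ℝ)) i a

lemma diag_null (n : ℕ) (i j : Fin n) (hij : j ≠ i) :
    volume {q : Fin n → ℝ | q i = q j} = 0 := by
  have hker : {q : Fin n → ℝ | q i = q j}
      = (LinearMap.ker ((LinearMap.proj i : (Fin n → ℝ) →ₗ[ℝ] ℝ) - LinearMap.proj j) : Set (Fin n → ℝ)) := by
    ext q
    simp [LinearMap.mem_ker, sub_eq_zero]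
  rw [hker]
  apply Measure.addHaar_submodule
  intro htop
  have h1 : (Pi.single i 1 : Fin n → ℝ) ∈ LinearMap.ker
      ((LinearMap.proj i : (Fin n → ℝ) →ₗ[ℝ] ℝ) - LinearMap.proj j) := htop ▸ Submodule.mem_top
  simp [LinearMap.mem_ker, Pi.single_apply, hij] at h1


/-- In the symmetric pacing second-price auction with `n` buyers sharing an increasing,
inverse Lipschitz continuous bidding quantile function `ṽ₀ : [0,1] → [0,1]` and common
budget `ρ₀ > 0`, the common expected payment
`p(ξ₀) = ∫_{[0,1]ⁿ} max(ξ₀ · max_{j≠i} ṽ₀(qⱼ), λ) · Φᵢ((ξ₀,…,ξ₀), q) dq`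
is an increasing continuous function of `ξ₀` on `[0,1]`; hence either `p 1 < ρ₀` (and
`ξ₀ = 1` is budget-extracting) or there exists `ξ₀* ∈ (0,1]` with `p ξ₀* = ρ₀`. -/
theorem stmt17 (n : ℕ) (i : Fin n) (v₀ : ℝ → ℝ) (ρ₀ lam L : ℝ) (p : ℝ → ℝ)
    (hmono : MonotoneOn v₀ (Icc (0:ℝ) 1))
    (hL : 0 < L)
    (hinv : ∀ q₁ q₂ : ℝ, 0 ≤ q₁ → q₁ < q₂ → q₂ ≤ 1 → L * (q₂ - q₁) ≤ v₀ q₂ - v₀ q₁)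
    (hvr : ∀ q ∈ Icc (0:ℝ) 1, v₀ q ∈ Icc (0:ℝ) 1)
    (hρ : 0 < ρ₀) (hlam : lam ∈ Ioo (0:ℝ) 1)
    (hp : ∀ ξ : ℝ, p ξ = ∫ q in box n,
        max (ξ * ⨆ j, if j = i then 0 else v₀ (q j)) lam *
          (if max (⨆ j, if j = i then 0 else ξ * v₀ (q j)) lam ≤ ξ * v₀ (q i)
            then (1:ℝ) else 0)) :
    MonotoneOn p (Icc (0:ℝ) 1) ∧ ContinuousOn p (Icc (0:ℝ) 1) ∧
      (p 1 < ρ₀ ∨ ∃ ξ ∈ Ioc (0:ℝ) 1, p ξ = ρ₀) := by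
  have hn : Nonempty (Fin n) := ⟨i⟩
  -- injectivity of v₀ on [0,1]
  have hinj : ∀ a ∈ Icc (0:ℝ) 1, ∀ b ∈ Icc (0:ℝ) 1, v₀ a = v₀ b → a = b := by
    intro a ha b hb hab
    by_contra hne
    rcases lt_or_gt_of_ne hne with h | h
    · have := hinv a b ha.1 h hb.2
      nlinarith
    · have := hinv b a hb.1 h ha.2
      nlinarith
  -- the common high-value function `M`
  set M : (Fin n → ℝ) → ℝ := fun q => ⨆ j, if j = i then 0 else v₀ (q j) with hM
  -- the integrand
  set F : ℝ → (Fin n → ℝ) → ℝ := fun ξ q =>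
      max (ξ * ⨆ j, if j = i then 0 else v₀ (q j)) lam *
        (if max (⨆ j, if j = i then 0 else ξ * v₀ (q j)) lam ≤ ξ * v₀ (q i)
          then (1:ℝ) else 0) with hF
  have hpF : ∀ ξ, p ξ = ∫ q in box n, F ξ q := hp
  -- pull constants out of the sup
  have hsup : ∀ ξ : ℝ, 0 ≤ ξ → ∀ q : Fin n → ℝ,
      (⨆ j, if j = i then 0 else ξ * v₀ (q j)) = ξ * M q := by
    intro ξ hξ q
    rw [hM, Real.mul_iSup_of_nonneg hξ]
    congr 1; funext j
    by_cases h : j = i <;> simp [h]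
  have hbdd : ∀ f : Fin n → ℝ, BddAbove (Set.range f) :=
    fun f => Set.Finite.bddAbove (Set.finite_range f)
  have hM0 : ∀ q, 0 ≤ M q := by
    intro q
    have := le_ciSup (hbdd fun j => if j = i then 0 else v₀ (q j)) i
    simpa using this
  have hM1 : ∀ q ∈ box n, M q ≤ 1 := by
    intro q hq
    apply ciSup_le
    intro j
    by_cases h : j = i
    · simp [h]
    · simp only [h, if_false]
      exact (hvr _ (hq j (mem_univ j))).2
  have hvq : ∀ q ∈ box n, v₀ (q i) ∈ Icc (0:ℝ) 1 := fun q hq => hvr _ (hq i (mem_univ i))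
  -- rewrite F on the box for nonneg ξ
  have hFeq : ∀ ξ : ℝ, 0 ≤ ξ → ∀ q, F ξ q =
      max (ξ * M q) lam * (if max (ξ * M q) lam ≤ ξ * v₀ (q i) then (1:ℝ) else 0) := by
    intro ξ hξ q
    rw [hF]
    simp only
    rw [hsup ξ hξ q, hM]
  -- bound
  have hFbd : ∀ ξ ∈ Icc (0:ℝ) 1, ∀ q ∈ box n, ‖F ξ q‖ ≤ 1 := by
    intro ξ hξ q hq
    rw [hFeq ξ hξ.1 q]
    have h1 : 0 ≤ max (ξ * M q) lam := le_trans hlam.1.le (le_max_right _ _)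
    have h2 : max (ξ * M q) lam ≤ 1 := by
      apply max_le _ hlam.2.le
      exact mul_le_one₀ hξ.2 (hM0 q) (hM1 q hq)
    have h3 : (0:ℝ) ≤ (if max (ξ * M q) lam ≤ ξ * v₀ (q i) then (1:ℝ) else 0) := by positivity
    have h4 : (if max (ξ * M q) lam ≤ ξ * v₀ (q i) then (1:ℝ) else 0) ≤ 1 := by
      split <;> norm_num
    rw [Real.norm_eq_abs, abs_of_nonneg (mul_nonneg h1 h3)]
    calc max (ξ * M q) lam * (if max (ξ * M q) lam ≤ ξ * v₀ (q i) then (1:ℝ) else 0)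
        ≤ 1 * 1 := by apply mul_le_mul h2 h4 h3 zero_le_one
      _ = 1 := by ring
  have hFnn : ∀ ξ : ℝ, 0 ≤ ξ → ∀ q, 0 ≤ F ξ q := by
    intro ξ hξ q
    rw [hFeq ξ hξ q]
    have h1 : 0 ≤ max (ξ * M q) lam := le_trans hlam.1.le (le_max_right _ _)
    have h3 : (0:ℝ) ≤ (if max (ξ * M q) lam ≤ ξ * v₀ (q i) then (1:ℝ) else 0) := by positivity
    exact mul_nonneg h1 h3
  -- measurability via the clamped function
  set w : ℝ → ℝ := fun t => v₀ (max 0 (min t 1)) with hw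
  have hw_eq : ∀ t ∈ Icc (0:ℝ) 1, w t = v₀ t := by
    intro t ht
    rw [hw]; simp only
    rw [min_eq_left ht.2, max_eq_right ht.1]
  have hw_meas : Measurable w := by
    have : Monotone w := by
      intro s t hst
      apply hmono
      · constructor
        · exact le_max_left _ _
        · simp [le_min_iff]
      · constructor
        · exact le_max_left _ _
        · simp [le_min_iff]
      · exact max_le_max le_rfl (min_le_min hst le_rfl)
    exact this.measurable
  -- measurable surrogate of F
  set W : (Fin n → ℝ) → ℝ := fun q => ⨆ j, if j = i then 0 else w (q j) with hW
  have hW_meas : Measurable W := by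
    have hWeq : W = Finset.univ.sup' (Finset.univ_nonempty_iff.mpr ⟨i⟩)
        (fun j (q : Fin n → ℝ) => if j = i then 0 else w (q j)) := by
      funext q
      rw [Finset.sup'_apply]
      exact (Finset.sup'_univ_eq_ciSup _).symm
    rw [hWeq]
    apply Finset.measurable_sup'
    intro j _
    by_cases h : j = i
    · simp only [h, if_pos rfl]; exact measurable_const
    · simp only [h, if_false]
      exact hw_meas.comp (measurable_pi_apply j)
  set G : ℝ → (Fin n → ℝ) → ℝ := fun ξ q =>
      max (ξ * W q) lam * (if max (ξ * W q) lam ≤ ξ * w (q i) then (1:ℝ) else 0) with hG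
  have hG_meas : ∀ ξ : ℝ, Measurable (G ξ) := by
    intro ξ
    have h1 : Measurable fun q : Fin n → ℝ => max (ξ * W q) lam :=
      ((measurable_const.mul hW_meas).max measurable_const)
    have h2 : Measurable fun q : Fin n → ℝ => ξ * w (q i) :=
      measurable_const.mul (hw_meas.comp (measurable_pi_apply i))
    exact h1.mul (Measurable.ite (measurableSet_le h1 h2) measurable_const measurable_const)
  have hWM : ∀ q ∈ box n, W q = M q ∧ w (q i) = v₀ (q i) := by
    intro q hq
    have hj : ∀ j, (if j = i then (0:ℝ) else w (q j)) = (if j = i then 0 else v₀ (q j)) := by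
      intro j
      by_cases h : j = i
      · simp [h]
      · simp only [h, if_false]
        exact hw_eq (q j) (hq j (mem_univ j))
    constructor
    · show (⨆ j, if j = i then (0:ℝ) else w (q j)) = ⨆ j, if j = i then 0 else v₀ (q j)
      simp only [hj]
    · exact hw_eq (q i) (hq i (mem_univ i))
  have hFG : ∀ ξ : ℝ, 0 ≤ ξ → ∀ q ∈ box n, F ξ q = G ξ q := by
    intro ξ hξ q hq
    rw [hFeq ξ hξ q]
    show _ = max (ξ * W q) lam * (if max (ξ * W q) lam ≤ ξ * w (q i) then (1:ℝ) else 0)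
    rw [(hWM q hq).1, (hWM q hq).2]
  -- box is measurable with volume one
  have hbox_meas : MeasurableSet (box n) :=
    MeasurableSet.univ_pi fun _ => measurableSet_Icc
  have hvol : volume (box n) = 1 := by
    rw [box, volume_pi_pi]
    simp [Real.volume_Icc]
  haveI hfin : IsFiniteMeasure (volume.restrict (box n)) := by
    constructor
    rw [Measure.restrict_apply_univ, hvol]
    exact ENNReal.one_lt_top
  have hF_meas : ∀ ξ ∈ Icc (0:ℝ) 1, AEStronglyMeasurable (F ξ) (volume.restrict (box n)) := by
    intro ξ hξ
    apply (hG_meas ξ).aestronglyMeasurable.congr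
    exact (ae_restrict_mem hbox_meas).mono fun q hq => (hFG ξ hξ.1 q hq).symm
  have hF_int : ∀ ξ ∈ Icc (0:ℝ) 1, Integrable (F ξ) (volume.restrict (box n)) := by
    intro ξ hξ
    refine Integrable.mono' (integrable_const 1) (hF_meas ξ hξ) ?_
    exact (ae_restrict_mem hbox_meas).mono fun q hq => hFbd ξ hξ q hq
  -- monotonicity
  have hmono_p : MonotoneOn p (Icc (0:ℝ) 1) := by
    intro ξ₁ hξ₁ ξ₂ hξ₂ h12
    rw [hpF ξ₁, hpF ξ₂]
    refine setIntegral_mono_on (hF_int ξ₁ hξ₁) (hF_int ξ₂ hξ₂) hbox_meas ?_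
    intro q hq
    rw [hFeq ξ₁ hξ₁.1 q, hFeq ξ₂ hξ₂.1 q]
    by_cases hc : max (ξ₁ * M q) lam ≤ ξ₁ * v₀ (q i)
    · have hlam1 : lam ≤ ξ₁ * v₀ (q i) := le_trans (le_max_right _ _) hc
      have hξ₁pos : 0 < ξ₁ := by
        rcases hξ₁.1.lt_or_eq with h | h
        · exact h
        · exfalso; rw [← h, zero_mul] at hlam1; linarith [hlam.1]
      have hv0 : 0 ≤ v₀ (q i) := (hvq q hq).1
      have hMv : M q ≤ v₀ (q i) :=
        le_of_mul_le_mul_left (le_trans (le_max_left _ _) hc) hξ₁pos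
      have hc2 : max (ξ₂ * M q) lam ≤ ξ₂ * v₀ (q i) :=
        max_le (mul_le_mul_of_nonneg_left hMv (le_trans hξ₁.1 h12))
          (le_trans hlam1 (mul_le_mul_of_nonneg_right h12 hv0))
      rw [if_pos hc, if_pos hc2, mul_one, mul_one]
      exact max_le_max (mul_le_mul_of_nonneg_right h12 (hM0 q)) le_rfl
    · rw [if_neg hc, mul_zero]
      have h1 : 0 ≤ max (ξ₂ * M q) lam := le_trans hlam.1.le (le_max_right _ _)
      have h3 : (0:ℝ) ≤ (if max (ξ₂ * M q) lam ≤ ξ₂ * v₀ (q i) then (1:ℝ) else 0) := by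
        positivity
      exact mul_nonneg h1 h3
  -- p 0 = 0
  have hp0 : p 0 = 0 := by
    rw [hpF 0]
    have hz : ∀ q, F 0 q = 0 := by
      intro q
      rw [hFeq 0 le_rfl q, zero_mul, max_eq_right hlam.1.le, if_neg, mul_zero]
      rw [zero_mul]
      exact not_le.mpr hlam.1
    simp [hz]
  -- continuity
  have hcont : ContinuousOn p (Icc (0:ℝ) 1) := by
    have hrw : p = fun ξ => ∫ q in box n, F ξ q := funext hpF
    rw [hrw]
    intro ξ₀ hξ₀
    apply continuousWithinAt_of_dominated (bound := fun _ => (1:ℝ))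
    · exact eventually_mem_nhdsWithin.mono fun ξ hξ => hF_meas ξ hξ
    · exact eventually_mem_nhdsWithin.mono fun ξ hξ =>
        (ae_restrict_mem hbox_meas).mono fun q hq => hFbd ξ hξ q hq
    · exact integrable_const 1
    · by_cases hcase : ξ₀ < lam
      · refine (ae_restrict_mem hbox_meas).mono fun q hq => ?_
        have hev : ∀ᶠ ξ in nhdsWithin ξ₀ (Icc (0:ℝ) 1), F ξ q = 0 := by
          filter_upwards [(eventually_lt_nhds hcase).filter_mono nhdsWithin_le_nhds,
            eventually_mem_nhdsWithin] with ξ hlt hmem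
          rw [hFeq ξ hmem.1 q, if_neg, mul_zero]
          intro hcond
          have h1 : lam ≤ ξ * v₀ (q i) := le_trans (le_max_right _ _) hcond
          have h2 : ξ * v₀ (q i) ≤ ξ := by
            nlinarith [(hvq q hq).1, (hvq q hq).2, hmem.1]
          linarith
        have h0 : F ξ₀ q = 0 := hev.self_of_nhdsWithin hξ₀
        exact continuousWithinAt_const.congr_of_eventuallyEq hev h0
      · push_neg at hcase
        have hξ₀pos : 0 < ξ₀ := lt_of_lt_of_le hlam.1 hcase
        set N₁ : Set (Fin n → ℝ) := {q | ξ₀ * v₀ (q i) = lam} ∩ box n with hN₁def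
        set N₂ : Set (Fin n → ℝ) := ⋃ j, {q : Fin n → ℝ | j ≠ i ∧ q i = q j} with hN₂def
        have hN₁ : volume N₁ = 0 := by
          rcases eq_empty_or_nonempty N₁ with h | ⟨q₀, hq₀⟩
          · simp [h]
          · refine measure_mono_null (fun q hq => ?_) (hyperplane_null n i (q₀ i))
            have h1 : v₀ (q i) = v₀ (q₀ i) :=
              mul_left_cancel₀ hξ₀pos.ne' (hq.1.trans hq₀.1.symm)
            exact hinj _ (hq.2 i (mem_univ i)) _ (hq₀.2 i (mem_univ i)) h1
        have hN₂ : volume N₂ = 0 := by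
          apply measure_iUnion_null
          intro j
          by_cases h : j = i
          · have : {q : Fin n → ℝ | j ≠ i ∧ q i = q j} = ∅ := by
              ext q; simp [h]
            simp [this]
          · exact measure_mono_null (fun q hq => hq.2) (diag_null n i j h)
        have hae : ∀ᵐ q ∂(volume.restrict (box n)), q ∉ N₁ ∪ N₂ :=
          ae_restrict_of_ae (measure_eq_zero_iff_ae_notMem.mp (measure_union_null hN₁ hN₂))
        filter_upwards [hae, ae_restrict_mem hbox_meas] with q hqN hqbox
        have hqi : q i ∈ Icc (0:ℝ) 1 := hqbox i (mem_univ i)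
        -- no equality at ξ₀
        have hne : max (ξ₀ * M q) lam ≠ ξ₀ * v₀ (q i) := by
          intro heq
          rcases le_or_gt (ξ₀ * M q) lam with hle | hlt
          · rw [max_eq_right hle] at heq
            exact hqN (Or.inl ⟨heq.symm, hqbox⟩)
          · rw [max_eq_left hlt.le] at heq
            have hMv : M q = v₀ (q i) := mul_left_cancel₀ hξ₀pos.ne' heq
            obtain ⟨j, hj⟩ := exists_eq_ciSup_of_finite
              (f := fun j : Fin n => if j = i then 0 else v₀ (q j))
            have hMpos : 0 < M q := by
              have h1 : 0 < ξ₀ * M q := lt_trans hlam.1 hlt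
              nlinarith [hM0 q]
            have hjne : j ≠ i := by
              intro h
              rw [h, if_pos rfl] at hj
              have h0 : M q = 0 := hj.symm
              rw [h0] at hMpos
              exact lt_irrefl _ hMpos
            rw [if_neg hjne] at hj
            have h5 : v₀ (q j) = M q := hj
            have hqj : q j ∈ Icc (0:ℝ) 1 := hqbox j (mem_univ j)
            have : q i = q j := hinj _ hqi _ hqj (hMv.symm.trans h5.symm)
            exact hqN (Or.inr (mem_iUnion.mpr ⟨j, hjne, this⟩))
        have hcont1 : Continuous fun ξ : ℝ => max (ξ * M q) lam :=
          (continuous_id.mul continuous_const).max continuous_const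
        have hcont2 : Continuous fun ξ : ℝ => ξ * v₀ (q i) :=
          continuous_id.mul continuous_const
        rcases lt_or_gt_of_ne hne with hlt | hgt
        · have hev : ∀ᶠ ξ in nhds ξ₀, max (ξ * M q) lam < ξ * v₀ (q i) :=
            Filter.eventually_iff.mpr ((isOpen_lt hcont1 hcont2).mem_nhds hlt)
          have heq : ∀ᶠ ξ in nhdsWithin ξ₀ (Icc (0:ℝ) 1),
              F ξ q = max (ξ * M q) lam := by
            filter_upwards [hev.filter_mono nhdsWithin_le_nhds,
              eventually_mem_nhdsWithin] with ξ h1 h2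
            rw [hFeq ξ h2.1 q, if_pos h1.le, mul_one]
          exact hcont1.continuousWithinAt.congr_of_eventuallyEq heq
            (by rw [hFeq ξ₀ hξ₀pos.le q, if_pos hlt.le, mul_one])
        · have hev : ∀ᶠ ξ in nhds ξ₀, ξ * v₀ (q i) < max (ξ * M q) lam :=
            Filter.eventually_iff.mpr ((isOpen_lt hcont2 hcont1).mem_nhds hgt)
          have heq : ∀ᶠ ξ in nhdsWithin ξ₀ (Icc (0:ℝ) 1), F ξ q = 0 := by
            filter_upwards [hev.filter_mono nhdsWithin_le_nhds,
              eventually_mem_nhdsWithin] with ξ h1 h2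
            rw [hFeq ξ h2.1 q, if_neg (not_le.mpr h1), mul_zero]
          exact continuousWithinAt_const.congr_of_eventuallyEq heq
            (by rw [hFeq ξ₀ hξ₀pos.le q, if_neg (not_le.mpr hgt), mul_zero])
  refine ⟨hmono_p, hcont, ?_⟩
  by_cases hfinal : p 1 < ρ₀
  · exact Or.inl hfinal
  · push_neg at hfinal
    right
    have hsub := intermediate_value_Icc (zero_le_one) hcont
    have hmem : ρ₀ ∈ Icc (p 0) (p 1) := ⟨by rw [hp0]; exact hρ.le, hfinal⟩
    obtain ⟨ξ, hξ, hpξ⟩ := hsub hmem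
    refine ⟨ξ, ⟨?_, hξ.2⟩, hpξ⟩
    rcases hξ.1.lt_or_eq with h | h
    · exact h
    · exfalso
      rw [← h, hp0] at hpξ
      linarith
end
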